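/- Let G be a finite vertex-transitive simple graph, let k ≥ 0 be an integer, fix a vertex v of G, let r denote the degree of v, and let β*_k = β_k(⟨N(v)⟩) be the k-dependence number of the subgraph of G induced by the neighborhood of v. If β*_k − k + r > 0, then β_k(G) ≤ β*_k · |V(G)| / (β*_k − k + r). -/

import Mathlib

open Filter Topology

/-- The `d`-dimensional kings graph on `Fin (n 0) × ⋯ × Fin (n (d-1))`:
distinct vertices are adjacent iff their coordinates differ by at most 1. -/
def kingsGraph (d : ℕ) (n : Fin d → ℕ) :
    SimpleGraph (∀ i : Fin d, Fin (n i)) where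
  Adj u v := u ≠ v ∧ ∀ i, |((v i : ℤ)) - (u i : ℤ)| ≤ 1
  symm := by
    constructor
    rintro u v ⟨h1, h2⟩
    exact ⟨h1.symm, fun i => by rw [abs_sub_comm]; exact h2 i⟩
  loopless := by constructor; intro v h; exact h.1 rfl

/-- The `d`-dimensional toroidal kings graph on `ZMod (n 0) × ⋯ × ZMod (n (d-1))`:
distinct vertices are adjacent iff each coordinate difference is `-1`, `0` or `1`. -/
def torusGraph (d : ℕ) (n : Fin d → ℕ) :
    SimpleGraph (∀ i : Fin d, ZMod (n i)) where
  Adj u v := u ≠ v ∧ ∀ i, v i - u i = -1 ∨ v i - u i = 0 ∨ v i - u i = 1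
  symm := by
    constructor
    rintro u v ⟨h1, h2⟩
    refine ⟨h1.symm, fun i => ?_⟩
    rcases h2 i with h | h | h
    · right; right; rw [show u i - v i = -(v i - u i) by ring, h]; norm_num
    · right; left; rw [show u i - v i = -(v i - u i) by ring, h]; norm_num
    · left; rw [show u i - v i = -(v i - u i) by ring, h]
  loopless := by constructor; intro v h; exact h.1 rfl

/-- A set `S` of vertices is `k`-dependent if every vertex of `S`
has at most `k` neighbors in `S`. -/
def IsKDependent {V : Type*} (G : SimpleGraph V) (k : ℕ) (S : Set V) : Prop :=
  ∀ v ∈ S, (S ∩ G.neighborSet v).ncard ≤ k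

/-- `betaK G k` is the maximum cardinality of a `k`-dependent set in `G`. -/
noncomputable def betaK {V : Type*} (G : SimpleGraph V) (k : ℕ) : ℕ :=
  sSup {m | ∃ S : Set V, IsKDependent G k S ∧ S.ncard = m}

/-- A set `S` of vertices is half-dependent if every vertex `v ∈ S`
has at most `|N(v)|/2` neighbors in `S`. -/
def IsHalfDependent {V : Type*} (G : SimpleGraph V) (S : Set V) : Prop :=
  ∀ v ∈ S, 2 * (S ∩ G.neighborSet v).ncard ≤ (G.neighborSet v).ncard

/-- `halfNum G` is the maximum cardinality of a half-dependent set in `G`. -/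
noncomputable def halfNum {V : Type*} (G : SimpleGraph V) : ℕ :=
  sSup {m | ∃ S : Set V, IsHalfDependent G S ∧ S.ncard = m}

/-- A graph is vertex-transitive if any vertex can be mapped to any other
by a graph automorphism. -/
def IsVertexTransitive {V : Type*} (G : SimpleGraph V) : Prop :=
  ∀ u v : V, ∃ f : G ≃g G, f u = v


/-!
Let `S` be a maximum `k`-dependent set and count the pairs `(u, s)` with `s ∈ S` adjacent to `u`.
Since `G` is `r`-regular there are `|S| r` of them. A vertex of `S` has at most `k` neighbours
in `S`, and any vertex `u` has at most `β*_k` of them, because an automorphism moving `u` to `v`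
carries `S ∩ N(u)` onto a `k`-dependent set of `⟨N(v)⟩`. Hence
`|S| r ≤ |S| k + (|V| - |S|) β*_k`, which rearranges to the bound.
-/

section

open Finset

variable {V W : Type*} {G : SimpleGraph V} {H : SimpleGraph W} {k : ℕ}

theorem IsKDependent.preimage [Finite W] {S : Set W} (f : G ↪g H) (hS : IsKDependent H k S) :
    IsKDependent G k (f ⁻¹' S) := by
  intro x hx
  calc (f ⁻¹' S ∩ G.neighborSet x).ncard
      = (f '' (f ⁻¹' S ∩ G.neighborSet x)).ncard :=
        (Set.ncard_image_of_injective _ f.injective).symm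
    _ ≤ (S ∩ H.neighborSet (f x)).ncard := by
        refine Set.ncard_le_ncard ?_
        rintro _ ⟨y, ⟨hyS, hxy⟩, rfl⟩
        exact ⟨hyS, f.map_adj_iff.2 hxy⟩
    _ ≤ k := hS _ hx

theorem bddAbove_setOf_ncard_isKDependent [Finite V] (G : SimpleGraph V) (k : ℕ) :
    BddAbove {m | ∃ S : Set V, IsKDependent G k S ∧ S.ncard = m} := by
  refine ⟨Nat.card V, ?_⟩
  rintro _ ⟨S, -, rfl⟩
  exact Set.ncard_le_card S

theorem IsKDependent.ncard_le_betaK [Finite V] {S : Set V} (hS : IsKDependent G k S) :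
    S.ncard ≤ betaK G k :=
  le_csSup (bddAbove_setOf_ncard_isKDependent G k) ⟨S, hS, rfl⟩

theorem exists_isKDependent_card_eq_betaK [Finite V] (G : SimpleGraph V) (k : ℕ) :
    ∃ s : Finset V, IsKDependent G k ↑s ∧ #s = betaK G k := by
  have hne : {m | ∃ S : Set V, IsKDependent G k S ∧ S.ncard = m}.Nonempty :=
    ⟨0, ∅, fun _ h => absurd h (Set.notMem_empty _), Set.ncard_empty V⟩
  obtain ⟨S, hS, hcard⟩ := Nat.sSup_mem hne (bddAbove_setOf_ncard_isKDependent G k)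
  refine ⟨S.toFinite.toFinset, by simpa using hS, ?_⟩
  rw [← Set.ncard_eq_toFinset_card S]
  exact hcard

theorem IsKDependent.ncard_inter_le_betaK_induce [Finite V] {S : Set V}
    (hS : IsKDependent G k S) (A : Set V) : (S ∩ A).ncard ≤ betaK (G.induce A) k := by
  have hdep := hS.preimage (SimpleGraph.Embedding.induce A)
  rw [Set.inter_comm, ← Subtype.image_preimage_coe,
    Set.ncard_image_of_injective _ Subtype.val_injective]
  exact hdep.ncard_le_betaK

theorem IsVertexTransitive.ncard_neighborSet_eq (hG : IsVertexTransitive G) (u v : V) :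
    (G.neighborSet u).ncard = (G.neighborSet v).ncard := by
  obtain ⟨f, rfl⟩ := hG u v
  rw [← Nat.card_coe_set_eq, ← Nat.card_coe_set_eq]
  exact Nat.card_congr (f.mapNeighborSet u)

theorem IsKDependent.ncard_inter_neighborSet_le_betaK [Finite V] (hG : IsVertexTransitive G)
    {S : Set V} (hS : IsKDependent G k S) (u v : V) :
    (S ∩ G.neighborSet u).ncard ≤ betaK (G.induce (G.neighborSet v)) k := by
  obtain ⟨f, rfl⟩ := hG v u
  have hpre : f ⁻¹' (S ∩ G.neighborSet (f v)) = f ⁻¹' S ∩ G.neighborSet v := by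
    ext x
    simp only [Set.mem_preimage, Set.mem_inter_iff, SimpleGraph.mem_neighborSet, f.map_adj_iff]
  calc (S ∩ G.neighborSet (f v)).ncard = (f ⁻¹' (S ∩ G.neighborSet (f v))).ncard :=
        (Set.ncard_preimage_of_injective_subset_range f.injective
          (by simp [f.surjective.range_eq])).symm
    _ ≤ _ := hpre ▸ (hS.preimage f.toEmbedding).ncard_inter_le_betaK_induce _

theorem sum_ncard_inter_neighborSet [Fintype V] (G : SimpleGraph V) (s : Finset V) :
    ∑ u, ((s : Set V) ∩ G.neighborSet u).ncard = ∑ x ∈ s, (G.neighborSet x).ncard := by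
  classical
  have hleft (u : V) : ((s : Set V) ∩ G.neighborSet u).ncard = #(s.bipartiteAbove G.Adj u) := by
    rw [← Set.ncard_coe_finset]
    congr 1
    ext
    simp [Finset.bipartiteAbove]
  have hright (x : V) : (G.neighborSet x).ncard = #(univ.bipartiteBelow G.Adj x) := by
    rw [← Set.ncard_coe_finset]
    congr 1
    ext
    simp [Finset.bipartiteBelow, G.adj_comm]
  simp_rw [hleft, hright]
  exact sum_card_bipartiteAbove_eq_sum_card_bipartiteBelow _

theorem IsKDependent.card_mul_add_le [Fintype V] {s : Finset V} {r b : ℕ}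
    (hS : IsKDependent G k ↑s) (hreg : ∀ u, (G.neighborSet u).ncard = r)
    (hout : ∀ u ∉ s, ((s : Set V) ∩ G.neighborSet u).ncard ≤ b) :
    #s * r + #s * b ≤ #s * k + Fintype.card V * b := by
  classical
  set d := fun u => ((s : Set V) ∩ G.neighborSet u).ncard
  have hcount : #s * r = ∑ u ∈ s, d u + ∑ u ∈ sᶜ, d u := by
    rw [sum_add_sum_compl, sum_ncard_inter_neighborSet, sum_congr rfl fun x _ => hreg x,
      sum_const, smul_eq_mul]
  have hin : ∑ u ∈ s, d u ≤ #s * k := by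
    simpa using sum_le_card_nsmul s d k fun u hu => hS u (by simpa using hu)
  have hcompl : ∑ u ∈ sᶜ, d u ≤ #sᶜ * b := by
    simpa using sum_le_card_nsmul sᶜ d b fun u hu => hout u (by simpa using hu)
  rw [← card_add_card_compl s, add_mul]
  linarith

end

/-- the neighborhood bound for k-dependence in vertex-transitive graphs. -/
theorem stmt_7 {V : Type*} [Fintype V] (G : SimpleGraph V)
    (hG : IsVertexTransitive G) (k : ℕ) (v : V)
    (r : ℕ) (hr : r = (G.neighborSet v).ncard)
    (bstar : ℕ) (hb : bstar = betaK (G.induce (G.neighborSet v)) k)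
    (hpos : (0 : ℝ) < (bstar : ℝ) - (k : ℝ) + (r : ℝ)) :
    (betaK G k : ℝ) ≤
      (bstar : ℝ) * (Fintype.card V : ℝ) / ((bstar : ℝ) - (k : ℝ) + (r : ℝ)) := by
  obtain ⟨s, hS, hcard⟩ := exists_isKDependent_card_eq_betaK G k
  have hreg (u : V) : (G.neighborSet u).ncard = r := hr ▸ hG.ncard_neighborSet_eq u v
  have hlocal (u : V) (_ : u ∉ s) : ((s : Set V) ∩ G.neighborSet u).ncard ≤ bstar :=
    hb ▸ hS.ncard_inter_neighborSet_le_betaK hG u v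
  have hcount : (s.card * r + s.card * bstar : ℝ) ≤ s.card * k + Fintype.card V * bstar := by
    exact_mod_cast hS.card_mul_add_le hreg hlocal
  rw [← hcard, le_div_iff₀ hpos]
  linarith
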